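/- arXiv:1812.02993 — 2 statements merged into one kernel-verified Lean document; each statement's English description precedes it below -/
import Mathlib

section
/- For every concave g : ℝ^k → ℝ and every family ξ = (ξ_i)_i with ξ_i : V_{-i} → ℝ≥0, the map b ↦ G(g, b, ξ) is concave on (ℝ≥0)^k: for all b, b' ∈ (ℝ≥0)^k and θ ∈ [0,1], G(g, θ·b + (1−θ)·b', ξ) ≥ θ·G(g, b, ξ) + (1−θ)·G(g, b', ξ). -/
open Finset

namespace SinglePeriod

/-- A single-period setting with `k` buyers: finite nonnegative value spaces and
full-support probability mass functions, independent across buyers. -/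
structure Setting (k : ℕ) where
  V : Fin k → Finset ℝ
  V_nonempty : ∀ i, (V i).Nonempty
  V_nonneg : ∀ i, ∀ s ∈ V i, (0 : ℝ) ≤ s
  f : Fin k → ℝ → ℝ
  f_pos : ∀ i, ∀ s ∈ V i, 0 < f i s
  f_sum : ∀ i, ∑ s ∈ V i, f i s = 1

variable {k : ℕ}

/-- The finite set of all (valid) value profiles. -/
noncomputable def profiles (S : Setting k) : Finset (Fin k → ℝ) :=
  Fintype.piFinset fun i => S.V i

/-- Probability of a value profile (independent coordinates). -/
noncomputable def prob (S : Setting k) (v : Fin k → ℝ) : ℝ := ∏ i, S.f i (v i)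

/-- The largest element of `V i` strictly below `s`, or `0` if none exists. -/
noncomputable def predV (S : Setting k) (i : Fin k) (s : ℝ) : ℝ :=
  WithBot.unbotD 0 (((S.V i).filter fun s' => s' < s).max)

/-- An allocation rule. -/
abbrev Alloc (k : ℕ) := (Fin k → ℝ) → Fin k → ℝ

/-- A family `ξ = (ξ_i)_i` of per-buyer expected utilities; `ξ i v` is required to
depend only on `v_{-i}` (see `ValidXi`). -/
abbrev Util (k : ℕ) := Fin k → (Fin k → ℝ) → ℝ

/-- `ξ` is a valid family: nonnegative and `ξ i` depends only on the coordinates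
other than `i`. -/
def ValidXi (S : Setting k) (ξ : Util k) : Prop :=
  (∀ i v, 0 ≤ ξ i v) ∧
  (∀ (i : Fin k) (v : Fin k → ℝ) (s : ℝ), ξ i (Function.update v i s) = ξ i v)

/-- Envelope utility `u'_i(v) = Σ_{s ∈ V_i, s ≤ v_i} x_i(s, v_{-i}) (s - pred s)`. -/
noncomputable def envU (S : Setting k) (x : Alloc k) (i : Fin k) (v : Fin k → ℝ) : ℝ :=
  ∑ s ∈ (S.V i).filter (fun s => s ≤ v i), x (Function.update v i s) i * (s - predV S i s)

/-- `ū'_i(v_{-i}) = E_{v_i}[u'_i(v)]`. -/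
noncomputable def envUbar (S : Setting k) (x : Alloc k) (i : Fin k) (v : Fin k → ℝ) : ℝ :=
  ∑ s ∈ S.V i, S.f i s * envU S x i (Function.update v i s)

/-- Balance increment `Δb_i(v) = u'_i(v) - ū'_i(v_{-i}) + ξ_i(v_{-i})`. -/
noncomputable def deltaB (S : Setting k) (x : Alloc k) (ξ : Util k)
    (v : Fin k → ℝ) (i : Fin k) : ℝ :=
  envU S x i v - envUbar S x i v + ξ i v

/-- The objective of the single-period program `P(g, b, ξ)` at allocation `x`. -/
noncomputable def obj (S : Setting k) (g : (Fin k → ℝ) → ℝ) (b : Fin k → ℝ)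
    (ξ : Util k) (x : Alloc k) : ℝ :=
  ∑ v ∈ profiles S, prob S v *
    ((∑ i, (v i * x v i - ξ i v)) + g (fun i => deltaB S x ξ v i + b i))

/-- Feasibility for the single-period program `P(g, b, ξ)`: allocation bounds,
feasibility, monotonicity, and the balance constraint. -/
def Feasible (S : Setting k) (b : Fin k → ℝ) (ξ : Util k) (x : Alloc k) : Prop :=
  (∀ v ∈ profiles S, ∀ i, 0 ≤ x v i ∧ x v i ≤ 1) ∧
  (∀ v ∈ profiles S, ∑ i, x v i ≤ 1) ∧
  (∀ (i : Fin k), ∀ v ∈ profiles S, ∀ s ∈ S.V i, ∀ s' ∈ S.V i, s ≤ s' →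
    x (Function.update v i s) i ≤ x (Function.update v i s') i) ∧
  (∀ (i : Fin k), ∀ v ∈ profiles S, envUbar S x i v ≤ b i + ξ i v)

/-- `G(g, b, ξ)`: the optimal value (supremum) of the program `P(g, b, ξ)`. -/
noncomputable def G (S : Setting k) (g : (Fin k → ℝ) → ℝ) (b : Fin k → ℝ)
    (ξ : Util k) : ℝ :=
  sSup {r : ℝ | ∃ x : Alloc k, Feasible S b ξ x ∧ r = obj S g b ξ x}


/-!
The pairs `(b, x)` with `x` feasible for `P(g, b, ξ)` form a convex set, and the objective is
jointly concave in `(b, x)`: `u'`, `ū'` and hence `Δb` are linear in `x`, and `g` is concave.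
Mixing a feasible `x` for `b` with a feasible `x'` for `b'` therefore gives a feasible allocation
for the mixed balance whose value is at least the mixed value, and passing to suprema gives the
claim. The suprema are finite because the zero allocation is feasible when `b ≥ 0`, and because
`Δb` stays in a bounded box on which the (continuous) concave `g` is bounded above.
-/

lemma update_mem_profiles {S : Setting k} {v : Fin k → ℝ} (hv : v ∈ profiles S)
    {i : Fin k} {s : ℝ} (hs : s ∈ S.V i) : Function.update v i s ∈ profiles S := by
  rw [profiles, Fintype.mem_piFinset] at hv ⊢
  intro j
  rcases eq_or_ne j i with rfl | hji
  · simpa using hs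
  · simpa [Function.update_of_ne hji] using hv j

lemma predV_nonneg (S : Setting k) (i : Fin k) (s : ℝ) :
    0 ≤ predV S i s := by
  unfold predV
  cases h : ((S.V i).filter fun s' => s' < s).max with
  | bot => simp
  | coe a => exact S.V_nonneg i a (Finset.mem_filter.1 (Finset.mem_of_max h)).1

lemma predV_le (S : Setting k) (i : Fin k) {s : ℝ} (hs : s ∈ S.V i) :
    predV S i s ≤ s := by
  unfold predV
  cases h : ((S.V i).filter fun s' => s' < s).max with
  | bot => exact S.V_nonneg i s hs
  | coe a => exact (Finset.mem_filter.1 (Finset.mem_of_max h)).2.le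

lemma prob_nonneg {S : Setting k} {v : Fin k → ℝ} (hv : v ∈ profiles S) :
    0 ≤ prob S v := by
  rw [profiles, Fintype.mem_piFinset] at hv
  exact Finset.prod_nonneg fun i _ => (S.f_pos i (v i) (hv i)).le

section Bounds

variable {S : Setting k} {x : Alloc k}

lemma envU_nonneg (hx : ∀ v ∈ profiles S, ∀ i, 0 ≤ x v i ∧ x v i ≤ 1)
    {v : Fin k → ℝ} (hv : v ∈ profiles S) (i : Fin k) : 0 ≤ envU S x i v := by
  refine Finset.sum_nonneg fun s hs => ?_
  have hsV := (Finset.mem_filter.1 hs).1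
  exact mul_nonneg (hx _ (update_mem_profiles hv hsV) i).1 (sub_nonneg.2 (predV_le S i hsV))

lemma envU_le_sum (hx : ∀ v ∈ profiles S, ∀ i, 0 ≤ x v i ∧ x v i ≤ 1)
    {v : Fin k → ℝ} (hv : v ∈ profiles S) (i : Fin k) :
    envU S x i v ≤ ∑ s ∈ S.V i, s := by
  calc envU S x i v ≤ ∑ s ∈ (S.V i).filter (fun s => s ≤ v i), s := by
        refine Finset.sum_le_sum fun s hs => ?_
        have hsV := (Finset.mem_filter.1 hs).1
        have hx01 := hx _ (update_mem_profiles hv hsV) i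
        have hpred0 := predV_nonneg S i s
        have hpred := predV_le S i hsV
        nlinarith
    _ ≤ ∑ s ∈ S.V i, s :=
        Finset.sum_le_sum_of_subset_of_nonneg (Finset.filter_subset _ _)
          fun s hs _ => S.V_nonneg i s hs

lemma envUbar_nonneg (hx : ∀ v ∈ profiles S, ∀ i, 0 ≤ x v i ∧ x v i ≤ 1)
    {v : Fin k → ℝ} (hv : v ∈ profiles S) (i : Fin k) : 0 ≤ envUbar S x i v :=
  Finset.sum_nonneg fun s hs =>
    mul_nonneg (S.f_pos i s hs).le (envU_nonneg hx (update_mem_profiles hv hs) i)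

lemma envUbar_le_sum (hx : ∀ v ∈ profiles S, ∀ i, 0 ≤ x v i ∧ x v i ≤ 1)
    {v : Fin k → ℝ} (hv : v ∈ profiles S) (i : Fin k) :
    envUbar S x i v ≤ ∑ s ∈ S.V i, s := by
  calc envUbar S x i v ≤ ∑ s ∈ S.V i, S.f i s * ∑ t ∈ S.V i, t :=
        Finset.sum_le_sum fun s hs => mul_le_mul_of_nonneg_left
          (envU_le_sum hx (update_mem_profiles hv hs) i) (S.f_pos i s hs).le
    _ = ∑ t ∈ S.V i, t := by rw [← Finset.sum_mul, S.f_sum i, one_mul]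

end Bounds

section Linearity

variable (S : Setting k) (x x' : Alloc k) (a c : ℝ)

lemma envU_linear_combination (i : Fin k) (v : Fin k → ℝ) :
    envU S (a • x + c • x') i v = a * envU S x i v + c * envU S x' i v := by
  simp only [envU, Finset.mul_sum, ← Finset.sum_add_distrib, Pi.add_apply, Pi.smul_apply,
    smul_eq_mul]
  exact Finset.sum_congr rfl fun s _ => by ring

lemma envUbar_linear_combination (i : Fin k) (v : Fin k → ℝ) :
    envUbar S (a • x + c • x') i v = a * envUbar S x i v + c * envUbar S x' i v := by
  simp only [envUbar, envU_linear_combination, Finset.mul_sum, ← Finset.sum_add_distrib]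
  exact Finset.sum_congr rfl fun s _ => by ring

lemma deltaB_convex_combination (ξ : Util k) (hac : a + c = 1) (v : Fin k → ℝ) (i : Fin k) :
    deltaB S (a • x + c • x') ξ v i = a * deltaB S x ξ v i + c * deltaB S x' ξ v i := by
  simp only [deltaB, envU_linear_combination, envUbar_linear_combination]
  linear_combination (-ξ i v) * hac

end Linearity

lemma feasible_zero {S : Setting k} {b : Fin k → ℝ} {ξ : Util k} (hb : ∀ i, 0 ≤ b i)
    (hξ : ∀ i v, 0 ≤ ξ i v) : Feasible S b ξ 0 := by
  refine ⟨fun _ _ _ => by simp, fun _ _ => by simp, fun _ _ _ _ _ _ _ _ => le_rfl, ?_⟩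
  intro i v _
  simpa [envUbar, envU] using add_nonneg (hb i) (hξ i v)

lemma convex_feasible (S : Setting k) (ξ : Util k) :
    Convex ℝ {p : (Fin k → ℝ) × Alloc k | Feasible S p.1 ξ p.2} := by
  rintro ⟨b, x⟩ hx ⟨b', x'⟩ hx' a c ha hc hac
  obtain ⟨hx01, hxsum, hxmono, hxbal⟩ : Feasible S b ξ x := hx
  obtain ⟨hx01', hxsum', hxmono', hxbal'⟩ : Feasible S b' ξ x' := hx'
  show Feasible S (a • b + c • b') ξ (a • x + c • x')
  refine ⟨fun v hv i => ?_, fun v hv => ?_, fun i v hv s hs s' hs' hss' => ?_, fun i v hv => ?_⟩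
  · simp only [Pi.add_apply, Pi.smul_apply, smul_eq_mul]
    obtain ⟨h0, h1⟩ := hx01 v hv i
    obtain ⟨h0', h1'⟩ := hx01' v hv i
    constructor <;> nlinarith
  · simp only [Pi.add_apply, Pi.smul_apply, smul_eq_mul, Finset.sum_add_distrib,
      ← Finset.mul_sum]
    nlinarith [hxsum v hv, hxsum' v hv]
  · simp only [Pi.add_apply, Pi.smul_apply, smul_eq_mul]
    nlinarith [hxmono i v hv s hs s' hs' hss', hxmono' i v hv s hs s' hs' hss']
  · rw [envUbar_linear_combination]
    simp only [Pi.add_apply, Pi.smul_apply, smul_eq_mul]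
    linear_combination mul_le_mul_of_nonneg_left (hxbal i v hv) ha
      + mul_le_mul_of_nonneg_left (hxbal' i v hv) hc + ξ i v * hac

lemma concaveOn_obj (S : Setting k) {g : (Fin k → ℝ) → ℝ} (hg : ConcaveOn ℝ Set.univ g)
    (ξ : Util k) :
    ConcaveOn ℝ Set.univ fun p : (Fin k → ℝ) × Alloc k => obj S g p.1 ξ p.2 := by
  refine ⟨convex_univ, ?_⟩
  rintro ⟨b, x⟩ - ⟨b', x'⟩ - a c ha hc hac
  simp only [obj, smul_eq_mul, Finset.mul_sum, ← Finset.sum_add_distrib, Prod.fst_add,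
    Prod.snd_add, Prod.smul_fst, Prod.smul_snd]
  refine Finset.sum_le_sum fun v hv => ?_
  have hlinear : ∑ i, (v i * (a • x + c • x') v i - ξ i v)
      = a * ∑ i, (v i * x v i - ξ i v) + c * ∑ i, (v i * x' v i - ξ i v) := by
    simp only [Finset.mul_sum, ← Finset.sum_add_distrib, Pi.add_apply, Pi.smul_apply,
      smul_eq_mul]
    exact Finset.sum_congr rfl fun i _ => by linear_combination ξ i v * hac
  have hargument : (fun i => deltaB S (a • x + c • x') ξ v i + (a • b + c • b') i)
      = a • (fun i => deltaB S x ξ v i + b i) + c • (fun i => deltaB S x' ξ v i + b' i) := by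
    funext i
    simp only [deltaB_convex_combination S x x' a c ξ hac, Pi.add_apply, Pi.smul_apply,
      smul_eq_mul]
    ring
  have hconcave := hg.2 (Set.mem_univ fun i => deltaB S x ξ v i + b i)
    (Set.mem_univ fun i => deltaB S x' ξ v i + b' i) ha hc hac
  rw [hlinear, hargument]
  linear_combination mul_le_mul_of_nonneg_left hconcave (prob_nonneg hv)

lemma abs_deltaB_le {S : Setting k} {x : Alloc k} (ξ : Util k)
    (hx : ∀ v ∈ profiles S, ∀ i, 0 ≤ x v i ∧ x v i ≤ 1)
    {v : Fin k → ℝ} (hv : v ∈ profiles S) (i : Fin k) :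
    |deltaB S x ξ v i| ≤ ∑ s ∈ S.V i, s + ∑ w ∈ profiles S, |ξ i w| := by
  have hξ : |ξ i v| ≤ ∑ w ∈ profiles S, |ξ i w| :=
    Finset.single_le_sum (f := fun w => |ξ i w|) (fun w _ => abs_nonneg _) hv
  have hU0 := envU_nonneg hx hv i
  have hU := envU_le_sum hx hv i
  have hUbar0 := envUbar_nonneg hx hv i
  have hUbar := envUbar_le_sum hx hv i
  rw [deltaB, abs_le]
  constructor <;> linarith [neg_abs_le (ξ i v), le_abs_self (ξ i v)]

lemma bddAbove_obj (S : Setting k) {g : (Fin k → ℝ) → ℝ} (hg : ConcaveOn ℝ Set.univ g)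
    (b : Fin k → ℝ) (ξ : Util k) :
    BddAbove {r : ℝ | ∃ x : Alloc k, Feasible S b ξ x ∧ r = obj S g b ξ x} := by
  set R : Fin k → ℝ := fun i => ∑ s ∈ S.V i, s + ∑ w ∈ profiles S, |ξ i w|
  obtain ⟨M, hM⟩ := isCompact_Icc.bddAbove_image
    ((hg.continuousOn isOpen_univ).mono (Set.subset_univ (Set.Icc (b - R) (b + R))))
  refine ⟨∑ v ∈ profiles S, prob S v * (∑ i, (v i - ξ i v) + M), ?_⟩
  rintro r ⟨x, ⟨hx, -, -, -⟩, rfl⟩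
  refine Finset.sum_le_sum fun v hv => mul_le_mul_of_nonneg_left ?_ (prob_nonneg hv)
  have hvalue : ∑ i, (v i * x v i - ξ i v) ≤ ∑ i, (v i - ξ i v) := by
    refine Finset.sum_le_sum fun i _ => ?_
    have := mul_le_mul_of_nonneg_left (hx v hv i).2
      (S.V_nonneg i (v i) (Fintype.mem_piFinset.1 hv i))
    linarith [mul_one (v i)]
  have hbox : (fun i => deltaB S x ξ v i + b i) ∈ Set.Icc (b - R) (b + R) := by
    refine ⟨fun i => ?_, fun i => ?_⟩ <;>
    linarith [abs_le.1 (abs_deltaB_le ξ hx hv i), show (b - R) i = b i - R i from rfl,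
      show (b + R) i = b i + R i from rfl]
  linarith [hM ⟨_, hbox, rfl⟩]

lemma sSup_convex_combination_le {E X : Type*} [AddCommGroup E] [Module ℝ E]
    [AddCommGroup X] [Module ℝ X] {P : E → X → Prop} {F : E → X → ℝ}
    (hF : ConcaveOn ℝ {p : E × X | P p.1 p.2} fun p => F p.1 p.2)
    {b b' : E} (hb : {r | ∃ x, P b x ∧ r = F b x}.Nonempty)
    (hb' : {r | ∃ x, P b' x ∧ r = F b' x}.Nonempty)
    (hbdd : ∀ e, BddAbove {r | ∃ x, P e x ∧ r = F e x})
    {θ : ℝ} (hθ0 : 0 ≤ θ) (hθ1 : θ ≤ 1) :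
    θ * sSup {r | ∃ x, P b x ∧ r = F b x} + (1 - θ) * sSup {r | ∃ x, P b' x ∧ r = F b' x}
      ≤ sSup {r | ∃ x, P (θ • b + (1 - θ) • b') x ∧
          r = F (θ • b + (1 - θ) • b') x} := by
  have hθ1' : 0 ≤ 1 - θ := sub_nonneg.2 hθ1
  rw [← smul_eq_mul, ← smul_eq_mul, ← Real.sSup_smul_of_nonneg hθ0,
    ← Real.sSup_smul_of_nonneg hθ1', ← csSup_add (hb.smul_set) ((hbdd b).smul_of_nonneg hθ0)
      (hb'.smul_set) ((hbdd b').smul_of_nonneg hθ1')]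
  refine csSup_le (hb.smul_set.add hb'.smul_set) ?_
  rintro _ ⟨_, ⟨_, ⟨x, hx, rfl⟩, rfl⟩, _, ⟨_, ⟨x', hx', rfl⟩, rfl⟩, rfl⟩
  have hθ : θ + (1 - θ) = 1 := add_sub_cancel θ 1
  have hmem := hF.1 (x := (b, x)) (y := (b', x')) hx hx' hθ0 hθ1' hθ
  exact (hF.2 (x := (b, x)) (y := (b', x')) hx hx' hθ0 hθ1' hθ).trans
    (le_csSup (hbdd _) ⟨_, hmem, rfl⟩)

theorem G_concave_in_balance_general
    (k : ℕ) (S : Setting k)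
    (g : (Fin k → ℝ) → ℝ) (hg : ConcaveOn ℝ Set.univ g)
    (ξ : Util k) (hξ : ValidXi S ξ)
    (b b' : Fin k → ℝ) (hb : ∀ i, 0 ≤ b i) (hb' : ∀ i, 0 ≤ b' i)
    (θ : ℝ) (hθ0 : 0 ≤ θ) (hθ1 : θ ≤ 1) :
    θ * G S g b ξ + (1 - θ) * G S g b' ξ
      ≤ G S g (fun i => θ * b i + (1 - θ) * b' i) ξ :=
  sSup_convex_combination_le
    (P := fun e x => Feasible S e ξ x) (F := fun e x => obj S g e ξ x)
    ((concaveOn_obj S hg ξ).subset (Set.subset_univ _) (convex_feasible S ξ))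
    ⟨_, 0, feasible_zero hb hξ.1, rfl⟩ ⟨_, 0, feasible_zero hb' hξ.1, rfl⟩
    (fun e => bddAbove_obj S hg e ξ) hθ0 hθ1

/-- For every concave `g : ℝ^k → ℝ` and valid family `ξ`, the optimal
value `b ↦ G(g, b, ξ)` is concave on `(ℝ≥0)^k`. -/
theorem G_concave_in_balance
    (k : ℕ) (hk : 1 ≤ k) (S : Setting k)
    (g : (Fin k → ℝ) → ℝ) (hg : ConcaveOn ℝ Set.univ g)
    (ξ : Util k) (hξ : ValidXi S ξ)
    (b b' : Fin k → ℝ) (hb : ∀ i, 0 ≤ b i) (hb' : ∀ i, 0 ≤ b' i)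
    (θ : ℝ) (hθ0 : 0 ≤ θ) (hθ1 : θ ≤ 1) :
    θ * G S g b ξ + (1 - θ) * G S g b' ξ
      ≤ G S g (fun i => θ * b i + (1 - θ) * b' i) ξ :=
  G_concave_in_balance_general k S g hg ξ hξ b b' hb hb' θ hθ0 hθ1

end SinglePeriod
end

section
/- If (x, p) is IC, then the expected payment equals the payment at zero plus the expected Myerson virtual welfare: E_v[p(v)] = p(0) + E_v[(v − (1 − F(v))/f(v))·x(v)], where the expectation is taken with respect to the density f. (Measurability is automatic: IC implies x is nondecreasing and u(v) = v·x(v) − p(v) is convex.) -/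
open MeasureTheory intervalIntegral

/-!
Comparing the reports `a` and `b` in the IC constraint gives `x a * (b - a) ≤ u b - u a` for the
utility `u v = v * x v - p v`. Hence `x` is monotone, `u` is Lipschitz (so absolutely continuous),
and `u' = x` wherever `u` is differentiable in the interior. Integrating `u` by parts against
`f = d/dv (-∫_v^v̄ f)` gives `E[u] = u 0 + ∫ x v * (1 - F v) dv`, and `p = v x - u` turns this
into the virtual-welfare formula.
-/

open Set Filter Topology

open scoped NNReal Interval

def utility (x p : ℝ → ℝ) (v : ℝ) : ℝ := v * x v - p v

def IncentiveCompatibleOn (s : Set ℝ) (x p : ℝ → ℝ) : Prop :=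
  ∀ v ∈ s, ∀ v' ∈ s, v * x v' - p v' ≤ v * x v - p v

theorem MonotoneOn.abs_le_max_abs_abs {g : ℝ → ℝ} {a b v : ℝ} (hg : MonotoneOn g (Icc a b))
    (hv : v ∈ Icc a b) : |g v| ≤ max |g a| |g b| :=
  _root_.abs_le_max_abs_abs (hg ⟨le_rfl, hv.1.trans hv.2⟩ hv hv.1)
    (hg hv ⟨hv.1.trans hv.2, le_rfl⟩ hv.2)

theorem MonotoneOn.intervalIntegrable_mul {g f : ℝ → ℝ} {a b : ℝ} (hab : a ≤ b)
    (hg : MonotoneOn g (Icc a b)) (hf : IntervalIntegrable f volume a b) :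
    IntervalIntegrable (fun v => g v * f v) volume a b := by
  have hg' : IntervalIntegrable g volume a b := (uIcc_of_le hab ▸ hg).intervalIntegrable
  rw [intervalIntegrable_iff_integrableOn_Ioc_of_le hab] at hf hg' ⊢
  refine hf.bdd_mul (c := max |g a| |g b|) hg'.aestronglyMeasurable
    ((ae_restrict_iff' measurableSet_Ioc).2 (Eventually.of_forall fun v hv => ?_))
  exact hg.abs_le_max_abs_abs (Ioc_subset_Icc_self hv)

namespace IncentiveCompatibleOn

variable {s : Set ℝ} {x p : ℝ → ℝ}

theorem mul_sub_le_utility_sub (h : IncentiveCompatibleOn s x p) {a b : ℝ} (ha : a ∈ s)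
    (hb : b ∈ s) : x a * (b - a) ≤ utility x p b - utility x p a := by
  have := h b hb a ha
  simp only [utility]
  linarith

theorem monotoneOn (h : IncentiveCompatibleOn s x p) : MonotoneOn x s := by
  intro a ha b hb hab
  rcases hab.eq_or_lt with rfl | hlt
  · exact le_rfl
  have hup := h.mul_sub_le_utility_sub ha hb
  have hdown := h.mul_sub_le_utility_sub hb ha
  nlinarith

theorem lipschitzOnWith_utility (h : IncentiveCompatibleOn s x p) {K : ℝ≥0}
    (hK : ∀ v ∈ s, |x v| ≤ K) : LipschitzOnWith K (utility x p) s := by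
  refine LipschitzOnWith.of_dist_le_mul fun b hb a ha => ?_
  have hup := h.mul_sub_le_utility_sub ha hb
  have hdown := h.mul_sub_le_utility_sub hb ha
  rw [Real.dist_eq, Real.dist_eq, abs_le]
  have hKa := abs_le.1 (hK a ha)
  have hKb := abs_le.1 (hK b hb)
  rcases le_total a b with hab | hba
  · rw [abs_of_nonneg (sub_nonneg.2 hab)]
    constructor <;> nlinarith
  · rw [abs_of_nonpos (sub_nonpos.2 hba)]
    constructor <;> nlinarith

theorem absolutelyContinuousOnInterval_utility {a b : ℝ} (hab : a ≤ b)
    (h : IncentiveCompatibleOn (Icc a b) x p) :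
    AbsolutelyContinuousOnInterval (utility x p) a b := by
  refine LipschitzOnWith.absolutelyContinuousOnInterval (K := max ‖x a‖₊ ‖x b‖₊) ?_
  rw [uIcc_of_le hab]
  refine h.lipschitzOnWith_utility fun v hv => ?_
  simpa using h.monotoneOn.abs_le_max_abs_abs hv

theorem deriv_utility (h : IncentiveCompatibleOn s x p) {v : ℝ} (hs : s ∈ 𝓝 v)
    (hd : DifferentiableAt ℝ (utility x p) v) : deriv (utility x p) v = x v := by
  obtain ⟨hleft, hright⟩ := hasDerivAt_iff_tendsto_slope_left_right.1 hd.hasDerivAt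
  refine le_antisymm (le_of_tendsto hleft ?_) (ge_of_tendsto hright ?_)
  · filter_upwards [nhdsWithin_le_nhds hs, self_mem_nhdsWithin] with b hb hbv
    rw [slope_def_field, div_le_iff_of_neg (sub_neg.2 hbv)]
    linarith [h.mul_sub_le_utility_sub (mem_of_mem_nhds hs) hb]
  · filter_upwards [nhdsWithin_le_nhds hs, self_mem_nhdsWithin] with b hb hvb
    rw [slope_def_field, le_div_iff₀ (sub_pos.2 hvb)]
    linarith [h.mul_sub_le_utility_sub (mem_of_mem_nhds hs) hb]

theorem ae_deriv_utility_eq {a b : ℝ} (hab : a ≤ b) (h : IncentiveCompatibleOn (Icc a b) x p) :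
    ∀ᵐ v, v ∈ Icc a b → deriv (utility x p) v = x v := by
  filter_upwards [(h.absolutelyContinuousOnInterval_utility hab).ae_differentiableAt,
    Ioo_ae_eq_Icc.mem_iff] with v hd hIoo hv
  exact h.deriv_utility (Icc_mem_nhds (hIoo.2 hv).1 (hIoo.2 hv).2) (hd (Icc_subset_uIcc hv))

theorem integral_utility_mul {a b : ℝ} (hab : a ≤ b) (h : IncentiveCompatibleOn (Icc a b) x p)
    {f : ℝ → ℝ} (hf : IntervalIntegrable f volume a b) :
    ∫ v in a..b, utility x p v * f v
      = utility x p a * (∫ v in a..b, f v) + ∫ v in a..b, x v * ∫ w in v..b, f w := by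
  set T : ℝ → ℝ := fun v => ∫ w in b..v, f w with hT_def
  have hT : AbsolutelyContinuousOnInterval T a b :=
    hf.absolutelyContinuousOnInterval_intervalIntegral right_mem_uIcc
  have hderivT : ∀ᵐ v, v ∈ Ι a b → utility x p v * f v = utility x p v * deriv T v := by
    filter_upwards [hf.ae_hasDerivAt_integral] with v hv hvab
    rw [(hv (uIoc_subset_uIcc hvab) b right_mem_uIcc).deriv]
  have hderivu :
      ∀ᵐ v, v ∈ Ι a b → deriv (utility x p) v * T v = -(x v * ∫ w in v..b, f w) := by
    filter_upwards [h.ae_deriv_utility_eq hab] with v hv hvab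
    rw [uIoc_of_le hab] at hvab
    simp only [hv (Ioc_subset_Icc_self hvab), hT_def, integral_symm v b, mul_neg]
  rw [integral_congr_ae hderivT,
    (h.absolutelyContinuousOnInterval_utility hab).integral_mul_deriv_eq_deriv_mul hT,
    integral_congr_ae hderivu, intervalIntegral.integral_neg]
  simp only [hT_def, integral_same, integral_symm b a]
  ring

theorem integral_payment_mul {a b : ℝ} (hab : a ≤ b) (h : IncentiveCompatibleOn (Icc a b) x p)
    {f : ℝ → ℝ} (hf : IntervalIntegrable f volume a b) :
    ∫ v in a..b, p v * f v
      = -utility x p a * (∫ v in a..b, f v)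
        + ∫ v in a..b, x v * (v * f v - ∫ w in v..b, f w) := by
  have hxvf : IntervalIntegrable (fun v => x v * (v * f v)) volume a b :=
    h.monotoneOn.intervalIntegrable_mul hab (hf.continuousOn_mul continuousOn_id)
  have huf : IntervalIntegrable (fun v => utility x p v * f v) volume a b :=
    hf.continuousOn_mul (h.absolutelyContinuousOnInterval_utility hab).continuousOn
  have hxT : IntervalIntegrable (fun v => x v * ∫ w in v..b, f w) volume a b :=
    ((uIcc_of_le hab ▸ h.monotoneOn).intervalIntegrable).mul_continuousOn
      (continuousOn_primitive_interval_left ((intervalIntegrable_iff').mp hf))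
  calc ∫ v in a..b, p v * f v
      = ∫ v in a..b, x v * (v * f v) - utility x p v * f v := by
        congr 1 with v
        simp only [utility]
        ring
    _ = (∫ v in a..b, x v * (v * f v)) - ∫ v in a..b, utility x p v * f v :=
        integral_sub hxvf huf
    _ = -utility x p a * (∫ v in a..b, f v)
          + ((∫ v in a..b, x v * (v * f v)) - ∫ v in a..b, x v * ∫ w in v..b, f w) := by
        rw [h.integral_utility_mul hab hf]
        ring
    _ = -utility x p a * (∫ v in a..b, f v)
          + ∫ v in a..b, x v * (v * f v - ∫ w in v..b, f w) := by
        simp_rw [mul_sub]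
        rw [integral_sub hxvf hxT]

end IncentiveCompatibleOn

theorem expected_payment_eq_expected_virtual_welfare_general
    (vbar : ℝ) (hvbar : 0 < vbar)
    (x p : ℝ → ℝ)
    (hIC : ∀ v ∈ Set.Icc (0 : ℝ) vbar, ∀ v' ∈ Set.Icc (0 : ℝ) vbar,
      v * x v' - p v' ≤ v * x v - p v)
    (f : ℝ → ℝ)
    (hfint : IntervalIntegrable f volume 0 vbar)
    (hfpos : ∀ v ∈ Set.Icc (0 : ℝ) vbar, 0 < f v)
    (F : ℝ → ℝ)
    (hF : ∀ w ∈ Set.Icc (0 : ℝ) vbar, F w = ∫ s in (0 : ℝ)..w, f s)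
    (hF1 : F vbar = 1) :
    (∫ v in (0 : ℝ)..vbar, p v * f v)
      = p 0 + ∫ v in (0 : ℝ)..vbar, (v - (1 - F v) / f v) * x v * f v := by
  have hvbar' : vbar ∈ Icc 0 vbar := right_mem_Icc.2 hvbar.le
  have htail : ∀ v ∈ Icc 0 vbar, ∫ w in v..vbar, f w = 1 - F v := fun v hv => by
    rw [hF v hv, ← hF1, hF vbar hvbar']
    exact (integral_interval_sub_left hfint
      (hfint.mono_set (uIcc_subset_uIcc left_mem_uIcc (Icc_subset_uIcc hv)))).symm
  rw [IncentiveCompatibleOn.integral_payment_mul hvbar.le hIC hfint, ← hF vbar hvbar', hF1]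
  simp only [utility, zero_mul, zero_sub, neg_neg, mul_one]
  congr 1
  refine integral_congr fun v hv => ?_
  rw [uIcc_of_le hvbar.le] at hv
  simp only [htail v hv]
  field_simp [(hfpos v hv).ne']

/-- For a single-buyer, single-item IC mechanism `(x, p)` on `[0, v̄]`
and a value distributed with positive density `f` and CDF `F`, the expected payment
equals the payment at zero plus the expected Myerson virtual welfare:
`E_v[p(v)] = p(0) + E_v[(v − (1 − F(v))/f(v))·x(v)]`. -/
theorem expected_payment_eq_expected_virtual_welfare
    (vbar : ℝ) (hvbar : 0 < vbar)
    (x p : ℝ → ℝ)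
    (hx01 : ∀ v ∈ Set.Icc (0 : ℝ) vbar, x v ∈ Set.Icc (0 : ℝ) 1)
    (hIC : ∀ v ∈ Set.Icc (0 : ℝ) vbar, ∀ v' ∈ Set.Icc (0 : ℝ) vbar,
      v * x v' - p v' ≤ v * x v - p v)
    (f : ℝ → ℝ)
    (hfint : IntervalIntegrable f volume 0 vbar)
    (hfpos : ∀ v ∈ Set.Icc (0 : ℝ) vbar, 0 < f v)
    (F : ℝ → ℝ)
    (hF : ∀ w ∈ Set.Icc (0 : ℝ) vbar, F w = ∫ s in (0 : ℝ)..w, f s)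
    (hF1 : F vbar = 1) :
    (∫ v in (0 : ℝ)..vbar, p v * f v)
      = p 0 + ∫ v in (0 : ℝ)..vbar, (v - (1 - F v) / f v) * x v * f v :=
  expected_payment_eq_expected_virtual_welfare_general vbar hvbar x p hIC f hfint hfpos F hF hF1
end
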